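/- arXiv:2012.01664 — 3 statements merged into one kernel-verified Lean document; each statement's English description precedes it below -/
import Mathlib

section
/- Let H' and H be connected graphs with H' a subgraph of H (on a subset of the vertices of H). Then diam(H) ≤ diam(H') + 2·lp(H[V \ V(H')]) + 2, where lp denotes the length (number of edges) of a longest path and H[V \ V(H')] is the graph obtained from H by deleting all vertices of H' and all edges incident to them. -/
/-! Since `H` is connected, the component of a vertex `v ∉ V(H')` in `H - V(H')` contains a
neighbour `x` of some `w ∈ V(H')`, and a shortest walk from `v` to `x` in that component is a
path, so `dist v w ≤ lp(H - V(H')) + 1`. Two vertices of `H` are therefore joined through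
their nearest vertices in `H'`, which are at distance at most `diam H'` from each other. -/

/-- The length (number of edges) of a longest simple path in a graph. -/
noncomputable def SimpleGraph.longestPath {V : Type*} (G : SimpleGraph V) : ℕ :=
  sSup {n | ∃ (u v : V) (p : G.Walk u v), p.IsPath ∧ p.length = n}

namespace SimpleGraph

variable {V W : Type*} {G : SimpleGraph V}

lemma Walk.IsPath.length_le_longestPath [Finite V] {u v : V} {p : G.Walk u v} (hp : p.IsPath) :
    p.length ≤ G.longestPath := by
  have := Fintype.ofFinite V
  exact le_csSup ⟨Fintype.card V, fun _ ⟨_, _, q, hq, hn⟩ => hn ▸ hq.length_lt.le⟩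
    ⟨u, v, p, hp, rfl⟩

lemma Reachable.dist_le_longestPath [Finite V] {u v : V} (h : G.Reachable u v) :
    G.dist u v ≤ G.longestPath :=
  let ⟨_, hp, hlen⟩ := h.exists_path_of_dist
  hlen ▸ hp.length_le_longestPath

lemma Reachable.dist_map_le {G' : SimpleGraph W} (f : G →g G') {u v : V} (h : G.Reachable u v) :
    G'.dist (f u) (f v) ≤ G.dist u v := by
  obtain ⟨p, hp⟩ := h.exists_walk_length_eq_dist
  simpa [hp] using dist_le (p.map f)

lemma Subgraph.dist_le_diam_coe [Finite V] {H : G.Subgraph} (hH : H.coe.Connected) {a b : V}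
    (ha : a ∈ H.verts) (hb : b ∈ H.verts) : G.dist a b ≤ H.coe.diam :=
  have := hH.nonempty
  calc G.dist a b ≤ H.coe.dist ⟨a, ha⟩ ⟨b, hb⟩ := (hH ⟨a, ha⟩ ⟨b, hb⟩).dist_map_le H.hom
    _ ≤ H.coe.diam := dist_le_diam (connected_iff_ediam_ne_top.mp hH)

lemma Reachable.exists_adj_mem_of_notMem {s : Set V} {v u : V} (h : G.Reachable v u)
    (hv : v ∉ s) (hu : u ∈ s) :
    ∃ (x : ↥sᶜ) (w : V), w ∈ s ∧ G.Adj x w ∧ (G.induce sᶜ).Reachable ⟨v, hv⟩ x := by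
  obtain ⟨p⟩ := h
  let S : Set V := {y | ∃ hy : y ∈ sᶜ, (G.induce sᶜ).Reachable ⟨v, hv⟩ ⟨y, hy⟩}
  obtain ⟨d, -, ⟨hx, hvx⟩, hdS⟩ :=
    p.exists_boundary_dart S ⟨hv, .rfl⟩ fun ⟨hu', _⟩ => hu' hu
  refine ⟨⟨d.fst, hx⟩, d.snd, ?_, d.adj, hvx⟩
  by_contra hw
  have hadj : (G.induce sᶜ).Adj ⟨d.fst, hx⟩ ⟨d.snd, hw⟩ := d.adj
  exact hdS ⟨hw, hvx.trans hadj.reachable⟩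

lemma Connected.exists_mem_dist_le_longestPath_induce_compl [Finite V] (hG : G.Connected)
    {s : Set V} (hs : s.Nonempty) (v : V) :
    ∃ w ∈ s, G.dist v w ≤ (G.induce sᶜ).longestPath + 1 := by
  by_cases hv : v ∈ s
  · exact ⟨v, hv, by simp⟩
  obtain ⟨u, hu⟩ := hs
  obtain ⟨x, w, hw, hxw, hvx⟩ := (hG v u).exists_adj_mem_of_notMem hv hu
  refine ⟨w, hw, ?_⟩
  calc G.dist v w ≤ G.dist v x + G.dist x w := hG.dist_triangle
    _ ≤ (G.induce sᶜ).dist ⟨v, hv⟩ x + 1 :=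
      add_le_add (hvx.dist_map_le (Embedding.induce sᶜ).toHom) (dist_eq_one_iff_adj.mpr hxw).le
    _ ≤ (G.induce sᶜ).longestPath + 1 := by grw [hvx.dist_le_longestPath]

lemma Connected.diam_le_of_forall_exists_dist_le (hG : G.Connected) {s : Set V} {r d : ℕ}
    (hr : ∀ v, ∃ w ∈ s, G.dist v w ≤ r) (hd : ∀ a ∈ s, ∀ b ∈ s, G.dist a b ≤ d) :
    G.diam ≤ d + 2 * r := by
  have := hG.nonempty
  obtain ⟨u, v, huv⟩ := G.exists_dist_eq_diam
  obtain ⟨a, ha, hua⟩ := hr u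
  obtain ⟨b, hb, hvb⟩ := hr v
  calc G.diam = G.dist u v := huv.symm
    _ ≤ G.dist u a + G.dist a v := hG.dist_triangle
    _ ≤ G.dist u a + (G.dist a b + G.dist b v) :=
      add_le_add_right (hG.dist_triangle (v := b)) _
    _ ≤ d + 2 * r := by rw [dist_comm (u := b)]; linarith [hd a ha b hb]

end SimpleGraph

/-- If `H'` is a connected subgraph of the connected graph `H`, then
`diam H ≤ diam H' + 2 · lp(H[V \ V(H')]) + 2`. -/
theorem stmt_1 {V : Type*} [Fintype V] (H : SimpleGraph V) (H' : H.Subgraph)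
    (hH : H.Connected) (hH' : H'.coe.Connected) :
    H.diam ≤ H'.coe.diam + 2 * (SimpleGraph.induce H'.vertsᶜ H).longestPath + 2 := by
  have hverts : H'.verts.Nonempty := Set.nonempty_coe_sort.mp hH'.nonempty
  have := hH.diam_le_of_forall_exists_dist_le
    (hH.exists_mem_dist_le_longestPath_induce_compl hverts)
    fun _ ha _ hb => SimpleGraph.Subgraph.dist_le_diam_coe hH' ha hb
  omega
end

section
/- Let G be a connected graph with excess q (i.e., |E(G)| = |V(G)| - 1 + q), and suppose G has a spanning tree T of height at most h (from some root). Then every simple path in G has length at most 2h(q+1) + q. -/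
/-!
Cut a path at its edges outside `T`. What remains are at most `q + 1` segments using only tree
edges; such a segment is the unique `T`-path between its ends, so its length is the tree distance,
at most `2h` through the root. The cut edges are distinct edges outside `T`, and there are exactly
`q` of those because a spanning tree has `|V| - 1` edges.
-/

namespace SimpleGraph

variable {V : Type*} {G : SimpleGraph V} {u v : V}

theorem IsAcyclic.length_eq_dist_of_isPath (hG : G.IsAcyclic) {p : G.Walk u v}
    (hp : p.IsPath) : p.length = G.dist u v := by
  obtain ⟨q, hq, hqdist⟩ := p.reachable.exists_path_of_dist
  obtain rfl : p = q := congrArg Subtype.val ((hG.subsingleton_path u v).elim ⟨p, hp⟩ ⟨q, hq⟩)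
  exact hqdist

theorem Connected.dist_le_two_mul_of_forall_dist_le (hG : G.Connected) {r : V} {h : ℕ}
    (hr : ∀ w, G.dist r w ≤ h) (u v : V) : G.dist u v ≤ 2 * h :=
  calc G.dist u v ≤ G.dist u r + G.dist r v := hG.dist_triangle
    _ ≤ h + h := Nat.add_le_add (dist_comm (G := G) ▸ hr u) (hr v)
    _ = 2 * h := (two_mul h).symm

namespace Subgraph

theorem IsSpanning.ncard_edgeSet_add_one_of_isTree [Finite V] {T : G.Subgraph}
    (hspan : T.IsSpanning) (hT : T.coe.IsTree) : T.edgeSet.ncard + 1 = Nat.card V := by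
  have hcard := (isTree_iff_connected_and_card.mp hT).2
  rwa [← T.image_coe_edgeSet_coe, Set.ncard_image_of_injective _
      (Sym2.map.injective Subtype.val_injective), ← Nat.card_coe_set_eq,
    ← Nat.card_congr (Equiv.subtypeUnivEquiv hspan)]

end Subgraph

theorem Walk.IsPath.length_eq_dist_coe_of_edges_subset {T : G.Subgraph} (hspan : T.IsSpanning)
    (hT : T.coe.IsAcyclic) {p : G.Walk u v} (hp : p.IsPath) (hpT : ∀ e ∈ p.edges, e ∈ T.edgeSet) :
    p.length = T.coe.dist ⟨u, hspan u⟩ ⟨v, hspan v⟩ := by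
  let f := T.spanningCoeEquivCoeOfSpanning hspan
  let p' := p.transfer T.spanningCoe (T.edgeSet_spanningCoe ▸ hpT)
  have hp' : (p'.map f.toHom).IsPath := (hp.transfer _).map f.injective
  calc p.length = (p'.map f.toHom).length := by rw [Walk.length_map, Walk.length_transfer]
    _ = _ := hT.length_eq_dist_of_isPath hp'

namespace Walk

theorem exists_eq_append_cons_of_exists_edge_notMem {S : Set (Sym2 V)} {p : G.Walk u v}
    (hp : ∃ e ∈ p.edges, e ∉ S) :
    ∃ (a b : V) (hab : G.Adj a b) (p₁ : G.Walk u a) (p₂ : G.Walk b v),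
      p = p₁.append (cons hab p₂) ∧ (∀ e ∈ p₁.edges, e ∈ S) ∧ s(a, b) ∉ S := by
  induction p with
  | nil => simp at hp
  | @cons x y w hxy p ih =>
    by_cases hxyS : s(x, y) ∈ S
    · obtain ⟨e, he, heS⟩ := hp
      have hep : e ∈ p.edges := by
        rw [edges_cons, List.mem_cons] at he
        exact he.resolve_left (by rintro rfl; exact heS hxyS)
      obtain ⟨a, b, hab, p₁, p₂, rfl, hp₁S, habS⟩ := ih ⟨e, hep, heS⟩
      refine ⟨a, b, hab, cons hxy p₁, p₂, rfl, ?_, habS⟩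
      simpa [hxyS] using hp₁S
    · exact ⟨x, y, hxy, nil, p, rfl, by simp, hxyS⟩

variable (S : Set (Sym2 V)) [DecidablePred (· ∈ S)]

theorem IsPath.length_le_of_forall_isPath_length_le {m : ℕ}
    (hS : ∀ ⦃a b : V⦄ (s : G.Walk a b), s.IsPath → (∀ e ∈ s.edges, e ∈ S) → s.length ≤ m)
    {p : G.Walk u v} (hp : p.IsPath) :
    p.length ≤ m * (p.edges.countP (· ∉ S) + 1) + p.edges.countP (· ∉ S) := by
  generalize hk : p.edges.countP (· ∉ S) = k
  induction k generalizing u with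
  | zero =>
    simpa using hS p hp (by simpa [List.countP_eq_zero] using hk)
  | succ k ih =>
    obtain ⟨a, b, hab, p₁, p₂, rfl, hp₁S, habS⟩ :=
      exists_eq_append_cons_of_exists_edge_notMem (S := S) (p := p)
        (by simpa [List.countP_pos_iff] using hk.trans_gt k.succ_pos)
    have hk₂ : p₂.edges.countP (· ∉ S) = k := by
      rw [edges_append, edges_cons, List.countP_append, List.countP_cons_of_pos (by simpa),
        List.countP_eq_zero.mpr (fun e he => by simpa using hp₁S e he)] at hk
      omega
    have hlen₁ := hS p₁ hp.of_append_left hp₁S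
    have hlen₂ := ih hp.of_append_right.of_cons hk₂
    rw [length_append, length_cons]
    nlinarith

theorem IsTrail.countP_edges_notMem_le [Finite V] {p : G.Walk u v} (hp : p.IsTrail) :
    p.edges.countP (· ∉ S) ≤ (G.edgeSet \ S).ncard := by
  classical
  rw [List.countP_eq_length_filter, ← List.toFinset_card_of_nodup (hp.edges_nodup.filter _),
    ← Set.ncard_coe_finset]
  refine Set.ncard_le_ncard (fun e he => ?_)
  simp only [Finset.mem_coe, List.mem_toFinset, List.mem_filter, decide_eq_true_eq] at he
  exact ⟨p.edges_subset_edgeSet he.1, he.2⟩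

end Walk

end SimpleGraph

theorem stmt_2_general {V : Type*} [Fintype V] (G : SimpleGraph V)
    (q h : ℕ)
    (hq : (Set.toFinite G.edgeSet).toFinset.card = Fintype.card V - 1 + q)
    (T : G.Subgraph) (hspan : T.IsSpanning) (htree : T.coe.IsTree) (r : V)
    (hheight : ∀ v : V, T.coe.dist ⟨r, hspan r⟩ ⟨v, hspan v⟩ ≤ h) :
    ∀ ⦃u v : V⦄ (p : G.Walk u v), p.IsPath → p.length ≤ 2 * h * (q + 1) + q := by
  classical
  intro u v p hp
  have hsegment : ∀ ⦃a b : V⦄ (s : G.Walk a b), s.IsPath → (∀ e ∈ s.edges, e ∈ T.edgeSet) →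
      s.length ≤ 2 * h := fun a b s hs hsT => by
    rw [hs.length_eq_dist_coe_of_edges_subset hspan htree.isAcyclic hsT]
    exact htree.connected.dist_le_two_mul_of_forall_dist_le (fun w => hheight w) _ _
  have hnontree : (G.edgeSet \ T.edgeSet).ncard = q := by
    have htreeEdges := hspan.ncard_edgeSet_add_one_of_isTree htree
    rw [Nat.card_eq_fintype_card] at htreeEdges
    rw [← Set.ncard_eq_toFinset_card] at hq
    rw [Set.ncard_sdiff' T.edgeSet_subset, hq]
    omega
  have hcount := hnontree ▸ hp.isTrail.countP_edges_notMem_le T.edgeSet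
  calc p.length
      ≤ 2 * h * (p.edges.countP (· ∉ T.edgeSet) + 1) + p.edges.countP (· ∉ T.edgeSet) :=
        hp.length_le_of_forall_isPath_length_le _ hsegment
    _ ≤ 2 * h * (q + 1) + q := by gcongr

/-- In a connected graph of excess `q` admitting a spanning tree of height at most `h`,
every simple path has length at most `2h(q+1) + q`. -/
theorem stmt_2 {V : Type*} [Fintype V] (G : SimpleGraph V) (hG : G.Connected)
    (q h : ℕ)
    (hq : (Set.toFinite G.edgeSet).toFinset.card = Fintype.card V - 1 + q)
    (T : G.Subgraph) (hspan : T.IsSpanning) (htree : T.coe.IsTree) (r : V)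
    (hheight : ∀ v : V, T.coe.dist ⟨r, hspan r⟩ ⟨v, hspan v⟩ ≤ h) :
    ∀ ⦃u v : V⦄ (p : G.Walk u v), p.IsPath → p.length ≤ 2 * h * (q + 1) + q :=
  stmt_2_general G q h hq T hspan htree r hheight
end

section
/- Let X_1, ..., X_n be independent random variables with |X_i| ≤ M almost surely and finite variances. Then for every x > 0, P(|Σ_{i=1}^n (X_i - E[X_i])| ≥ x) ≤ 2 exp( -(x²/2) / (Σ_{i=1}^n E[X_i²] + Mx/3) ). -/
open MeasureTheory ProbabilityTheory Real Finset Nat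

/-!
For `|u| ≤ c < 3` the exponential series beyond its linear part is dominated by a geometric
series of ratio `c / 3`, because `(k + 2)! ≥ 2 · 3 ^ k`; hence
`exp u ≤ 1 + u + u ^ 2 / (2 (1 - c / 3))`. Integrating this with `u = t X_i` and using
`1 + a ≤ exp a` bounds the moment generating function of `X_i - E X_i` by
`exp (t ^ 2 E[X_i ^ 2] / (2 (1 - t M / 3)))` for `0 ≤ t < 3 / M`. By independence these bounds
multiply, and Chernoff's bound with a suitable `t` gives the upper tail. The lower tail is the
upper tail of `-X_i`.
-/

theorem two_mul_three_pow_le_factorial_add_two (n : ℕ) : 2 * 3 ^ n ≤ (n + 2)! := by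
  induction n with
  | zero => decide
  | succ k ih =>
    rw [pow_succ, factorial_succ]
    nlinarith

theorem exp_le_one_add_add_sq_div_of_abs_le {u c : ℝ} (hu : |u| ≤ c) (hc : c < 3) :
    exp u ≤ 1 + u + u ^ 2 / (2 * (1 - c / 3)) := by
  have hc0 : 0 ≤ c := (abs_nonneg u).trans hu
  have hsum : Summable fun n : ℕ => u ^ n / n ! := summable_pow_div_factorial u
  have hgeom : Summable fun n : ℕ => u ^ 2 / 2 * (c / 3) ^ n :=
    (summable_geometric_of_lt_one (by positivity) (by linarith)).mul_left _
  have hterm (n : ℕ) : u ^ (n + 2) / (n + 2)! ≤ u ^ 2 / 2 * (c / 3) ^ n := by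
    have hfact : (2 * 3 ^ n : ℝ) ≤ (n + 2)! := by
      exact_mod_cast two_mul_three_pow_le_factorial_add_two n
    calc u ^ (n + 2) / (n + 2)! ≤ |u| ^ (n + 2) / (2 * 3 ^ n) := by
          rw [← abs_pow]
          exact div_le_div₀ (abs_nonneg _) (le_abs_self _) (by positivity) hfact
      _ = u ^ 2 * |u| ^ n / (2 * 3 ^ n) := by rw [pow_add, sq_abs, mul_comm]
      _ ≤ u ^ 2 * c ^ n / (2 * 3 ^ n) := by gcongr
      _ = u ^ 2 / 2 * (c / 3) ^ n := by rw [div_pow]; ring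
  calc exp u = ∑ n ∈ range 2, u ^ n / n ! + ∑' n : ℕ, u ^ (n + 2) / (n + 2)! := by
        rw [exp_eq_exp_ℝ, NormedSpace.exp_eq_tsum_div, hsum.sum_add_tsum_nat_add]
    _ ≤ 1 + u + ∑' n : ℕ, u ^ 2 / 2 * (c / 3) ^ n := by
        simp only [sum_range_succ, sum_range_zero, pow_zero, pow_one, factorial_zero,
          factorial_one, cast_one, div_one, zero_add]
        exact add_le_add le_rfl (((summable_nat_add_iff 2).2 hsum).tsum_le_tsum hterm hgeom)
    _ = 1 + u + u ^ 2 / (2 * (1 - c / 3)) := by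
        rw [tsum_mul_left, tsum_geometric_of_lt_one (by positivity) (by linarith)]
        field_simp

section

variable {Ω : Type*} [MeasurableSpace Ω] {μ : Measure Ω}

theorem integrable_exp_mul_of_ae_abs_le [IsFiniteMeasure μ] {Y : Ω → ℝ} {C : ℝ}
    (hY : AEMeasurable Y μ) (hb : ∀ᵐ ω ∂μ, |Y ω| ≤ C) (t : ℝ) :
    Integrable (fun ω => exp (t * Y ω)) μ := by
  refine .of_bound (hY.const_mul t).exp.aestronglyMeasurable (exp (|t| * C)) ?_
  filter_upwards [hb] with ω hω
  rw [norm_eq_abs, abs_exp, exp_le_exp]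
  exact (le_abs_self _).trans ((abs_mul _ _).trans_le (by gcongr))

theorem mgf_sub_integral_le [IsProbabilityMeasure μ] {Y : Ω → ℝ} {M t : ℝ}
    (hY : AEMeasurable Y μ) (hb : ∀ᵐ ω ∂μ, |Y ω| ≤ M) (ht : 0 ≤ t) (htM : t * M < 3) :
    mgf (fun ω => Y ω - ∫ ω', Y ω' ∂μ) μ t ≤
      exp (t ^ 2 * (∫ ω', Y ω' ^ 2 ∂μ) / (2 * (1 - t * M / 3))) := by
  set m := ∫ ω', Y ω' ∂μ
  set c := t ^ 2 / (2 * (1 - t * M / 3))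
  have hint : Integrable Y μ :=
    .of_bound hY.aestronglyMeasurable M (by simpa only [norm_eq_abs] using hb)
  have hint_sq : Integrable (fun ω => Y ω ^ 2) μ :=
    .of_bound (hY.pow_const 2).aestronglyMeasurable (M ^ 2) <| by
      filter_upwards [hb] with ω hω
      rw [norm_eq_abs, abs_pow]
      gcongr
  have hpoint : ∀ᵐ ω ∂μ, exp (t * Y ω) ≤ 1 + t * Y ω + c * Y ω ^ 2 := by
    filter_upwards [hb] with ω hω
    have htY : |t * Y ω| ≤ t * M := by rw [abs_mul, abs_of_nonneg ht]; gcongr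
    calc exp (t * Y ω) ≤ 1 + t * Y ω + (t * Y ω) ^ 2 / (2 * (1 - t * M / 3)) :=
          exp_le_one_add_add_sq_div_of_abs_le htY htM
      _ = 1 + t * Y ω + c * Y ω ^ 2 := by ring
  have hint_lin : Integrable (fun ω => 1 + t * Y ω) μ :=
    (integrable_const 1).add (hint.const_mul t)
  have hmgf : mgf Y μ t ≤ 1 + t * m + c * ∫ ω', Y ω' ^ 2 ∂μ := by
    calc mgf Y μ t ≤ ∫ ω, (1 + t * Y ω + c * Y ω ^ 2) ∂μ :=
          integral_mono_ae (integrable_exp_mul_of_ae_abs_le hY hb t)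
            (hint_lin.add (hint_sq.const_mul c)) hpoint
      _ = 1 + t * m + c * ∫ ω', Y ω' ^ 2 ∂μ := by
        rw [integral_add hint_lin (hint_sq.const_mul c),
          integral_add (integrable_const 1) (hint.const_mul t), integral_const_mul,
          integral_const_mul]
        simp [m]
  calc mgf (fun ω => Y ω - m) μ t = mgf Y μ t * exp (t * -m) := by
        simp_rw [sub_eq_add_neg]; exact mgf_add_const _
    _ ≤ exp (t * m + c * ∫ ω', Y ω' ^ 2 ∂μ) * exp (t * -m) := by
        gcongr
        linarith [add_one_le_exp (t * m + c * ∫ ω', Y ω' ^ 2 ∂μ)]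
    _ = exp (t ^ 2 * (∫ ω', Y ω' ^ 2 ∂μ) / (2 * (1 - t * M / 3))) := by
        rw [← exp_add]; congr 1; simp only [c]; ring

variable {ι : Type*} {X : ι → Ω → ℝ} {M : ℝ}

theorem mgf_sum_sub_integral_le (hmeas : ∀ i, Measurable (X i)) (hindep : iIndepFun X μ)
    (hbdd : ∀ i, ∀ᵐ ω ∂μ, |X i ω| ≤ M) (s : Finset ι) {t : ℝ} (ht : 0 ≤ t) (htM : t * M < 3) :
    mgf (fun ω => ∑ i ∈ s, (X i ω - ∫ ω', X i ω' ∂μ)) μ t ≤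
      exp (t ^ 2 * (∑ i ∈ s, ∫ ω', X i ω' ^ 2 ∂μ) / (2 * (1 - t * M / 3))) := by
  have := hindep.isProbabilityMeasure
  have hindep' : iIndepFun (fun i ω => X i ω - ∫ ω', X i ω' ∂μ) μ :=
    hindep.comp (fun i y => y - ∫ ω', X i ω' ∂μ) fun i => measurable_id.sub_const _
  rw [← Finset.sum_fn, hindep'.mgf_sum (fun i => (hmeas i).sub_const _), mul_sum, sum_div,
    exp_sum]
  exact prod_le_prod (fun i _ => mgf_nonneg) fun i _ =>
    mgf_sub_integral_le (hmeas i).aemeasurable (hbdd i) ht htM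

theorem measure_sum_sub_integral_ge_le (hmeas : ∀ i, Measurable (X i)) (hindep : iIndepFun X μ)
    (hbdd : ∀ i, ∀ᵐ ω ∂μ, |X i ω| ≤ M) (hM : 0 < M) (s : Finset ι) {x : ℝ} (hx : 0 < x) :
    μ {ω | x ≤ ∑ i ∈ s, (X i ω - ∫ ω', X i ω' ∂μ)} ≤
      ENNReal.ofReal (exp (-(x ^ 2 / 2) / ((∑ i ∈ s, ∫ ω', X i ω' ^ 2 ∂μ) + M * x / 3))) := by
  have := hindep.isProbabilityMeasure
  set σ := ∑ i ∈ s, ∫ ω', X i ω' ^ 2 ∂μ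
  have hσ : 0 ≤ σ := sum_nonneg fun i _ => integral_nonneg fun ω => sq_nonneg _
  -- Unlike the usual `x / (σ + M * x / 3)`, this choice keeps `t * M < 3` also when `σ = 0`,
  -- and it yields the same exponent `-(x ^ 2 / 2) / (σ + M * x / 3)`.
  set t := x / (σ + 2 * M * x / 3)
  have ht : 0 ≤ t := by positivity
  have htM : t * M < 3 := by
    rw [div_mul_eq_mul_div, div_lt_iff₀ (by positivity)]
    nlinarith [mul_pos hM hx]
  have hexponent :
      -t * x + t ^ 2 * σ / (2 * (1 - t * M / 3)) = -(x ^ 2 / 2) / (σ + M * x / 3) := by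
    have h1 : 1 - t * M / 3 = (σ + M * x / 3) / (σ + 2 * M * x / 3) := by
      simp only [t]; field_simp; ring
    rw [h1]; simp only [t]; field_simp; ring
  have hsum_bdd : ∀ᵐ ω ∂μ, |∑ i ∈ s, (X i ω - ∫ ω', X i ω' ∂μ)| ≤
      ∑ i ∈ s, (M + |∫ ω', X i ω' ∂μ|) := by
    filter_upwards [(Filter.eventually_all_finset s).2 fun i _ => hbdd i] with ω hω
    exact (abs_sum_le_sum_abs _ _).trans
      (sum_le_sum fun i hi => (abs_sub _ _).trans (add_le_add (hω i hi) le_rfl))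
  rw [ENNReal.le_ofReal_iff_toReal_le (measure_ne_top μ _) (exp_pos _).le, ← measureReal_def]
  calc μ.real {ω | x ≤ ∑ i ∈ s, (X i ω - ∫ ω', X i ω' ∂μ)}
      ≤ exp (-t * x) * mgf (fun ω => ∑ i ∈ s, (X i ω - ∫ ω', X i ω' ∂μ)) μ t :=
        measure_ge_le_exp_mul_mgf x ht
          (integrable_exp_mul_of_ae_abs_le (by fun_prop) hsum_bdd t)
    _ ≤ exp (-t * x) * exp (t ^ 2 * σ / (2 * (1 - t * M / 3))) := by
        gcongr; exact mgf_sum_sub_integral_le hmeas hindep hbdd s ht htM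
    _ = exp (-(x ^ 2 / 2) / (σ + M * x / 3)) := by rw [← exp_add, hexponent]

end

theorem stmt_5_general {Ω : Type*} [MeasurableSpace Ω] (μ : Measure Ω)
    (n : ℕ) (X : Fin n → Ω → ℝ) (M : ℝ) (hM : 0 < M)
    (hmeas : ∀ i, Measurable (X i))
    (hindep : iIndepFun X μ)
    (hbdd : ∀ i, ∀ᵐ ω ∂μ, |X i ω| ≤ M) :
    ∀ x : ℝ, 0 < x →
      μ {ω | x ≤ |∑ i, (X i ω - ∫ ω', X i ω' ∂μ)|} ≤
        ENNReal.ofReal (2 * Real.exp (-(x ^ 2 / 2) /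
          ((∑ i, ∫ ω', X i ω' ^ 2 ∂μ) + M * x / 3))) := by
  intro x hx
  set S := fun ω => ∑ i, (X i ω - ∫ ω', X i ω' ∂μ)
  set bound := exp (-(x ^ 2 / 2) / ((∑ i, ∫ ω', X i ω' ^ 2 ∂μ) + M * x / 3))
  have hupper : μ {ω | x ≤ S ω} ≤ ENNReal.ofReal bound :=
    measure_sum_sub_integral_ge_le hmeas hindep hbdd hM univ hx
  have hlower : μ {ω | x ≤ -S ω} ≤ ENNReal.ofReal bound := by
    have := measure_sum_sub_integral_ge_le (X := fun i ω => -X i ω) (fun i => (hmeas i).neg)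
      (hindep.comp (fun _ y => -y) fun _ => measurable_neg) (by simpa only [abs_neg] using hbdd)
      hM univ hx
    have hS (ω : Ω) : -S ω = ∑ i, (-X i ω - ∫ ω', -X i ω' ∂μ) := by
      rw [← sum_neg_distrib]
      exact sum_congr rfl fun i _ => by rw [integral_neg]; ring
    simp_rw [hS]
    simpa only [neg_sq] using this
  calc μ {ω | x ≤ |S ω|} ≤ μ ({ω | x ≤ S ω} ∪ {ω | x ≤ -S ω}) :=
        measure_mono fun ω (hω : x ≤ |S ω|) => le_abs.1 hω
    _ ≤ μ {ω | x ≤ S ω} + μ {ω | x ≤ -S ω} := measure_union_le _ _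
    _ ≤ ENNReal.ofReal bound + ENNReal.ofReal bound := add_le_add hupper hlower
    _ = ENNReal.ofReal (2 * bound) := by
        rw [two_mul, ENNReal.ofReal_add (exp_pos _).le (exp_pos _).le]

/-- Bernstein's inequality for independent bounded random variables. -/
theorem stmt_5 {Ω : Type*} [MeasurableSpace Ω] (μ : Measure Ω) [IsProbabilityMeasure μ]
    (n : ℕ) (X : Fin n → Ω → ℝ) (M : ℝ) (hM : 0 < M)
    (hmeas : ∀ i, Measurable (X i))
    (hindep : iIndepFun X μ)
    (hbdd : ∀ i, ∀ᵐ ω ∂μ, |X i ω| ≤ M) :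
    ∀ x : ℝ, 0 < x →
      μ {ω | x ≤ |∑ i, (X i ω - ∫ ω', X i ω' ∂μ)|} ≤
        ENNReal.ofReal (2 * Real.exp (-(x ^ 2 / 2) /
          ((∑ i, ∫ ω', X i ω' ^ 2 ∂μ) + M * x / 3))) :=
  stmt_5_general μ n X M hM hmeas hindep hbdd
end
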